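/- arXiv:1606.05893 — 2 statements merged into one kernel-verified Lean document; each statement's English description precedes it below -/
import Mathlib

section
/- Let n ≥ 1, let M be an n×n row-stochastic real matrix, let α ∈ (0,1], let v be a fixed index, and let e_v be the vector in ℝ^n whose v-th entry equals n and whose other entries equal 0. Define the sequence of vectors s⁰ = e_v and s^{(i)} = α • e_v + (1-α) • (Mᵀ ⬝ s^{(i-1)}) for i ≥ 1. Then the matrix I - (1-α) • Mᵀ is invertible and the sequence s^{(i)} converges (entrywise, as i → ∞) to α • (I - (1-α) • Mᵀ)⁻¹ ⬝ e_v. -/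
open Matrix

/-- L1 contraction: multiplying by `(1-α) • Mᵀ` shrinks the L1 norm by `1-α`. -/
lemma vial_contraction
    (n : ℕ) (M : Matrix (Fin n) (Fin n) ℝ)
    (hMnonneg : ∀ i j, 0 ≤ M i j) (hMrow : ∀ i, ∑ j, M i j = 1)
    (β : ℝ) (hβ0 : 0 ≤ β) (x : Fin n → ℝ) :
    ∑ u, |(β • ((Mᵀ).mulVec x)) u| ≤ β * ∑ u, |x u| := by
  have h1 : ∀ u, |(β • ((Mᵀ).mulVec x)) u| ≤ β * ∑ j, M j u * |x j| := by
    intro u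
    simp only [Pi.smul_apply, smul_eq_mul, abs_mul, abs_of_nonneg hβ0]
    apply mul_le_mul_of_nonneg_left _ hβ0
    rw [Matrix.mulVec, dotProduct]
    refine (Finset.abs_sum_le_sum_abs _ _).trans ?_
    apply Finset.sum_le_sum
    intro j _
    rw [Matrix.transpose_apply, abs_mul, abs_of_nonneg (hMnonneg j u)]
  calc ∑ u, |(β • ((Mᵀ).mulVec x)) u| ≤ ∑ u, β * ∑ j, M j u * |x j| :=
        Finset.sum_le_sum fun u _ => h1 u
    _ = β * ∑ j, (∑ u, M j u) * |x j| := by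
        rw [← Finset.mul_sum, Finset.sum_comm]
        congr 1
        exact Finset.sum_congr rfl fun j _ => by rw [Finset.sum_mul]
    _ = β * ∑ j, |x j| := by
        congr 1
        exact Finset.sum_congr rfl fun j _ => by rw [hMrow j, one_mul]

/-- Theorem 1 of the paper: for any backtracking strength `α ∈ (0,1]`, the matrix
`I - (1-α) • Mᵀ` is invertible and the vote capacity vectors
`s⁰ = e_v`, `s^{(i)} = α • e_v + (1-α) • Mᵀ ⬝ s^{(i-1)}` converge to
`α • (I - (1-α) • Mᵀ)⁻¹ ⬝ e_v`. -/
theorem vial_convergence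
    (n : ℕ) (hn : 1 ≤ n) (M : Matrix (Fin n) (Fin n) ℝ)
    (hMnonneg : ∀ i j, 0 ≤ M i j) (hMrow : ∀ i, ∑ j, M i j = 1)
    (α : ℝ) (hα : α ∈ Set.Ioc (0 : ℝ) 1) (v : Fin n)
    (e : Fin n → ℝ) (he : ∀ u, e u = if u = v then (n : ℝ) else 0)
    (s : ℕ → Fin n → ℝ) (hs0 : s 0 = e)
    (hs : ∀ i, s (i + 1) = α • e + (1 - α) • ((Mᵀ).mulVec (s i))) :
    IsUnit (1 - (1 - α) • Mᵀ : Matrix (Fin n) (Fin n) ℝ) ∧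
    Filter.Tendsto s Filter.atTop
      (nhds (α • ((1 - (1 - α) • Mᵀ : Matrix (Fin n) (Fin n) ℝ)⁻¹.mulVec e))) := by
  obtain ⟨hα0, hα1⟩ := hα
  set β : ℝ := 1 - α with hβ
  have hβ0 : 0 ≤ β := by simp [hβ]; linarith
  have hβ1 : β < 1 := by simp [hβ]; linarith
  set T : Matrix (Fin n) (Fin n) ℝ := 1 - β • Mᵀ with hT
  -- contraction specialized
  have key : ∀ x : Fin n → ℝ, ∑ u, |(β • ((Mᵀ).mulVec x)) u| ≤ β * ∑ u, |x u| :=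
    vial_contraction n M hMnonneg hMrow β hβ0
  -- injectivity of mulVec T
  have hinj : Function.Injective T.mulVec := by
    intro x y hxy
    have hz : T.mulVec (x - y) = 0 := by
      rw [Matrix.mulVec_sub, hxy, sub_self]
    set z := x - y with hzdef
    have hz2 : z = β • ((Mᵀ).mulVec z) := by
      have := hz
      rw [hT, Matrix.sub_mulVec, Matrix.one_mulVec, Matrix.smul_mulVec,
        sub_eq_zero] at this
      exact this
    have hN : ∑ u, |z u| ≤ β * ∑ u, |z u| := by
      calc ∑ u, |z u| = ∑ u, |(β • ((Mᵀ).mulVec z)) u| := by rw [← hz2]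
        _ ≤ β * ∑ u, |z u| := key z
    have hNnonneg : 0 ≤ ∑ u, |z u| := Finset.sum_nonneg fun u _ => abs_nonneg _
    have hN0 : ∑ u, |z u| = 0 := by nlinarith
    have hzero : ∀ u, z u = 0 := by
      intro u
      have := (Finset.sum_eq_zero_iff_of_nonneg (fun u _ => abs_nonneg (z u))).mp hN0 u
        (Finset.mem_univ u)
      exact abs_eq_zero.mp this
    have : z = 0 := funext hzero
    exact sub_eq_zero.mp (hzdef ▸ this)
  have hunit : IsUnit T := Matrix.mulVec_injective_iff_isUnit.mp hinj
  refine ⟨hunit, ?_⟩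
  -- the limit
  set x : Fin n → ℝ := α • (T⁻¹.mulVec e) with hx
  have hTx : T.mulVec x = α • e := by
    rw [hx, Matrix.mulVec_smul, Matrix.mulVec_mulVec,
      Matrix.mul_nonsing_inv T ((Matrix.isUnit_iff_isUnit_det T).mp hunit),
      Matrix.one_mulVec]
  have hfix : x = α • e + β • ((Mᵀ).mulVec x) := by
    have h2 : x - β • ((Mᵀ).mulVec x) = α • e := by
      rw [← hTx, hT, Matrix.sub_mulVec, Matrix.one_mulVec, Matrix.smul_mulVec]
    rw [← h2]; abel
  -- the error sequence
  have herr : ∀ i, s (i + 1) - x = β • ((Mᵀ).mulVec (s i - x)) := by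
    intro i
    rw [hs i, Matrix.mulVec_sub, smul_sub]
    conv_lhs => rw [hfix]
    abel
  have hbound : ∀ i, ∑ u, |(s i - x) u| ≤ β ^ i * ∑ u, |(s 0 - x) u| := by
    intro i
    induction i with
    | zero => simp
    | succ k ih =>
      calc ∑ u, |(s (k + 1) - x) u| = ∑ u, |(β • ((Mᵀ).mulVec (s k - x))) u| := by
            rw [herr k]
        _ ≤ β * ∑ u, |(s k - x) u| := key _
        _ ≤ β * (β ^ k * ∑ u, |(s 0 - x) u|) :=
            mul_le_mul_of_nonneg_left ih hβ0
        _ = β ^ (k + 1) * ∑ u, |(s 0 - x) u| := by ring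
  -- conclude entrywise convergence
  have hg : Filter.Tendsto (fun i => β ^ i * ∑ w, |(s 0 - x) w|) Filter.atTop (nhds 0) := by
    have := (tendsto_pow_atTop_nhds_zero_of_lt_one hβ0 hβ1).mul_const (∑ w, |(s 0 - x) w|)
    simpa using this
  rw [tendsto_pi_nhds]
  intro u
  have hlim : Filter.Tendsto (fun i => s i u - x u) Filter.atTop (nhds 0) := by
    refine squeeze_zero_norm (fun i => ?_) hg
    calc ‖s i u - x u‖ = |(s i - x) u| := rfl
      _ ≤ ∑ w, |(s i - x) w| :=
          Finset.single_le_sum (fun w _ => abs_nonneg ((s i - x) w)) (Finset.mem_univ u)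
      _ ≤ β ^ i * ∑ w, |(s 0 - x) w| := hbound i
  exact tendsto_sub_nhds_zero_iff.mp hlim
end

section
/- Let n, m_b, m_a ≥ 1. Let W_S be a symmetric n×n real matrix with nonnegative entries, let W_B be an n×m_b real matrix with nonnegative entries, and let W_A be an n×m_a real matrix with nonnegative entries. Assume each column sum c_y = Σ_x (W_B)_{xy} (for y in the behavior index set) and each column sum c'_z = Σ_x (W_A)_{xz} (for z in the attribute index set) is strictly positive, and that each total degree d_u = Σ_x (W_S)_{ux} + Σ_y (W_B)_{uy} + Σ_z (W_A)_{uz} is strictly positive. Define the n×n matrix M by M_{ux} = (1/d_u) • [ (W_S)_{ux} + Σ_y (W_B)_{uy}(W_B)_{xy}/c_y + Σ_z (W_A)_{uz}(W_A)_{xz}/c'_z ], let D = Σ_u d_u, and define π by π_u = d_u / D. Then π has nonnegative entries summing to 1 and satisfies Mᵀ ⬝ π = π. -/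
open Matrix

/-- Corollary 1 of the paper: for the SBA dividing matrix `M` with neighbor-type
shares proportional to the social/behavior/attribute degrees, the vector
`π_u = d_u / D` is a stationary distribution of the chain with transition
matrix `M`. -/
theorem sba_stationary_distribution
    (n mb ma : ℕ) (hn : 1 ≤ n) (hmb : 1 ≤ mb) (hma : 1 ≤ ma)
    (WS : Matrix (Fin n) (Fin n) ℝ) (WB : Matrix (Fin n) (Fin mb) ℝ)
    (WA : Matrix (Fin n) (Fin ma) ℝ)
    (hWSsymm : ∀ u x, WS u x = WS x u)
    (hWSnonneg : ∀ u x, 0 ≤ WS u x)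
    (hWBnonneg : ∀ u y, 0 ≤ WB u y)
    (hWAnonneg : ∀ u z, 0 ≤ WA u z)
    (c : Fin mb → ℝ) (hc : ∀ y, c y = ∑ x, WB x y) (hcpos : ∀ y, 0 < c y)
    (c' : Fin ma → ℝ) (hc' : ∀ z, c' z = ∑ x, WA x z) (hc'pos : ∀ z, 0 < c' z)
    (d : Fin n → ℝ)
    (hd : ∀ u, d u = (∑ x, WS u x) + (∑ y, WB u y) + (∑ z, WA u z))
    (hdpos : ∀ u, 0 < d u)
    (M : Matrix (Fin n) (Fin n) ℝ)
    (hM : ∀ u x, M u x = (1 / d u) *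
      (WS u x + (∑ y, WB u y * WB x y / c y) + (∑ z, WA u z * WA x z / c' z)))
    (D : ℝ) (hD : D = ∑ u, d u)
    (π : Fin n → ℝ) (hπ : ∀ u, π u = d u / D) :
    (∀ u, 0 ≤ π u) ∧ (∑ u, π u = 1) ∧ (Mᵀ).mulVec π = π := by

  haveI : Nonempty (Fin n) := ⟨⟨0, hn⟩⟩
  have hDpos : 0 < D := by
    rw [hD]; exact Finset.sum_pos (fun u _ => hdpos u) Finset.univ_nonempty
  refine ⟨fun u => ?_, ?_, ?_⟩
  · rw [hπ u]; exact div_nonneg (hdpos u).le hDpos.le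
  · simp only [hπ]
    rw [← Finset.sum_div, ← hD, div_self hDpos.ne']
  · funext x
    have key : ∑ u, M u x * d u = d x := by
      have h1 : ∀ u, M u x * d u =
          WS u x + (∑ y, WB u y * WB x y / c y) + (∑ z, WA u z * WA x z / c' z) := by
        intro u
        rw [hM u x, one_div, inv_mul_eq_div, div_mul_eq_mul_div, mul_div_assoc,
          div_self (hdpos u).ne', mul_one]
      simp only [h1]
      rw [Finset.sum_add_distrib, Finset.sum_add_distrib, Finset.sum_comm,
        Finset.sum_comm (f := fun u z => WA u z * WA x z / c' z)]
      have h2 : ∑ u, WS u x = ∑ y, WS x y := by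
        exact Finset.sum_congr rfl fun u _ => hWSsymm u x
      have h3 : ∀ y : Fin mb, ∑ u, WB u y * WB x y / c y = WB x y := by
        intro y
        rw [← Finset.sum_div, ← Finset.sum_mul, ← hc y, mul_comm,
          mul_div_assoc, div_self (hcpos y).ne', mul_one]
      have h4 : ∀ z : Fin ma, ∑ u, WA u z * WA x z / c' z = WA x z := by
        intro z
        rw [← Finset.sum_div, ← Finset.sum_mul, ← hc' z, mul_comm,
          mul_div_assoc, div_self (hc'pos z).ne', mul_one]
      rw [h2]
      rw [Finset.sum_congr rfl fun y _ => h3 y, Finset.sum_congr rfl fun z _ => h4 z,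
        ← hd x]
    simp only [mulVec, dotProduct, transpose_apply, hπ]
    calc ∑ u, M u x * (d u / D) = (∑ u, M u x * d u) / D := by
          rw [Finset.sum_div]; exact Finset.sum_congr rfl fun u _ => (mul_div_assoc _ _ _).symm
      _ = d x / D := by rw [key]
end
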